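/- Let r ≥ 2 be a real number. For every ε > 0 there exists a constant C_ε > 0 depending only on r and ε such that for all a ≥ 0 and all s, t ≥ 0: s·(a+t)^{r−2}·t + t·(a+s)^{r−2}·s ≤ ε φ_a(s) + C_ε φ_a(t), where φ_a(u) = ∫_0^u (a+σ)^{r−2} σ dσ. In particular C_ε is independent of a. -/

import Mathlib

/-!
The integrand `φ_a'(u) = (a+u)^{r-2} u` is monotone and doubling, `φ_a'(c u) ≤ c^{r-1} φ_a'(u)`
for `c ≥ 1`, so `φ_a(t) ≥ ∫_{t/2}^t φ_a' ≥ (t/2) φ_a'(t/2) ≥ 2^{-r} t φ_a'(t)`, uniformly in `a`.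
If `s ≤ D t`, both terms on the left are at most `D^{r-1} t φ_a'(t)`; if `D t ≤ s`, both are at
most `t φ_a'(s) ≤ s φ_a'(s) / D`. Taking `D ≥ 2^{r+1}/ε` gives the claim with
`C = 2^{r+1} D^{r-1}`.
-/

open MeasureTheory

/-- The shifted function `φ_a(t) = ∫_0^t (a+s)^{r−2} s ds`. -/
noncomputable def phi (r a t : ℝ) : ℝ := ∫ s in (0 : ℝ)..t, (a + s) ^ (r - 2) * s

noncomputable def phiDeriv (r a t : ℝ) : ℝ := (a + t) ^ (r - 2) * t

section
variable {r a : ℝ}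

lemma phiDeriv_nonneg (ha : 0 ≤ a) {t : ℝ} (ht : 0 ≤ t) : 0 ≤ phiDeriv r a t := by
  unfold phiDeriv; positivity

lemma phi_nonneg (ha : 0 ≤ a) {t : ℝ} (ht : 0 ≤ t) : 0 ≤ phi r a t :=
  intervalIntegral.integral_nonneg ht fun _ hs => phiDeriv_nonneg ha hs.1

lemma continuous_phiDeriv (hr : 2 ≤ r) : Continuous (phiDeriv r a) :=
  ((continuous_const.add continuous_id).rpow_const fun _ => Or.inr (by linarith)).mul
    continuous_id

lemma phiDeriv_le_phiDeriv (hr : 2 ≤ r) (ha : 0 ≤ a) {s t : ℝ} (hs : 0 ≤ s) (hst : s ≤ t) :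
    phiDeriv r a s ≤ phiDeriv r a t :=
  mul_le_mul (Real.rpow_le_rpow (by linarith) (by linarith) (by linarith)) hst hs
    (Real.rpow_nonneg (by linarith) _)

lemma phiDeriv_mul_le (hr : 2 ≤ r) (ha : 0 ≤ a) {c t : ℝ} (hc : 1 ≤ c) (ht : 0 ≤ t) :
    phiDeriv r a (c * t) ≤ c ^ (r - 1) * phiDeriv r a t := by
  have hbase : (a + c * t) ^ (r - 2) ≤ c ^ (r - 2) * (a + t) ^ (r - 2) := by
    rw [← Real.mul_rpow (by linarith) (by linarith)]
    exact Real.rpow_le_rpow (by positivity) (by nlinarith) (by linarith)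
  have hc' : c ^ (r - 1) = c ^ (r - 2) * c := by
    rw [← Real.rpow_add_one (by positivity)]; ring_nf
  calc (a + c * t) ^ (r - 2) * (c * t) ≤ c ^ (r - 2) * (a + t) ^ (r - 2) * (c * t) :=
        mul_le_mul_of_nonneg_right hbase (by positivity)
    _ = c ^ (r - 1) * ((a + t) ^ (r - 2) * t) := by rw [hc']; ring

lemma mul_phiDeriv_le_phi (hr : 2 ≤ r) (ha : 0 ≤ a) {t : ℝ} (ht : 0 ≤ t) :
    t * phiDeriv r a t ≤ 2 ^ r * phi r a t := by
  have hint : ∀ u v : ℝ, IntervalIntegrable (phiDeriv r a) volume u v :=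
    fun u v => (continuous_phiDeriv hr).intervalIntegrable u v
  have hfirst : 0 ≤ ∫ s in (0 : ℝ)..t / 2, phiDeriv r a s :=
    intervalIntegral.integral_nonneg (by linarith) fun s hs => phiDeriv_nonneg ha hs.1
  have hsecond : t / 2 * phiDeriv r a (t / 2) ≤ ∫ s in t / 2..t, phiDeriv r a s :=
    calc t / 2 * phiDeriv r a (t / 2) = ∫ _ in t / 2..t, phiDeriv r a (t / 2) := by
          rw [intervalIntegral.integral_const, smul_eq_mul, sub_half]
      _ ≤ ∫ s in t / 2..t, phiDeriv r a s :=
          intervalIntegral.integral_mono_on (by linarith) intervalIntegrable_const (hint _ _)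
            fun s hs => phiDeriv_le_phiDeriv hr ha (by linarith) hs.1
  have hsplit : phi r a t = (∫ s in (0 : ℝ)..t / 2, phiDeriv r a s) +
      ∫ s in t / 2..t, phiDeriv r a s :=
    (intervalIntegral.integral_add_adjacent_intervals (hint _ _) (hint _ _)).symm
  have hdoubling : phiDeriv r a t ≤ 2 ^ (r - 1) * phiDeriv r a (t / 2) := by
    simpa [mul_div_cancel₀] using phiDeriv_mul_le hr ha one_le_two (by linarith : 0 ≤ t / 2)
  have h2 : (2 : ℝ) ^ r = 2 ^ (r - 1) * 2 := by
    rw [← Real.rpow_add_one two_ne_zero]; ring_nf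
  calc t * phiDeriv r a t ≤ t * (2 ^ (r - 1) * phiDeriv r a (t / 2)) :=
        mul_le_mul_of_nonneg_left hdoubling ht
    _ = 2 ^ r * (t / 2 * phiDeriv r a (t / 2)) := by rw [h2]; ring
    _ ≤ 2 ^ r * phi r a t := by
        gcongr
        linarith

lemma mul_phiDeriv_le_mul_phiDeriv (hr : 2 ≤ r) (ha : 0 ≤ a) {s t : ℝ} (ht : 0 ≤ t)
    (hts : t ≤ s) : s * phiDeriv r a t ≤ t * phiDeriv r a s := by
  have hbase : (a + t) ^ (r - 2) ≤ (a + s) ^ (r - 2) :=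
    Real.rpow_le_rpow (by linarith) (by linarith) (by linarith)
  calc s * ((a + t) ^ (r - 2) * t) = s * t * (a + t) ^ (r - 2) := by ring
    _ ≤ s * t * (a + s) ^ (r - 2) := by gcongr; nlinarith
    _ = t * ((a + s) ^ (r - 2) * s) := by ring

lemma mul_phiDeriv_add_mul_phiDeriv_le_of_le_mul (hr : 2 ≤ r) (ha : 0 ≤ a) {D s t : ℝ}
    (hD : 1 ≤ D) (hs : 0 ≤ s) (ht : 0 ≤ t) (hst : s ≤ D * t) :
    s * phiDeriv r a t + t * phiDeriv r a s ≤ 2 ^ (r + 1) * D ^ (r - 1) * phi r a t := by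
  have hD_le : D ≤ D ^ (r - 1) := by
    simpa using Real.rpow_le_rpow_of_exponent_le hD (by linarith : (1 : ℝ) ≤ r - 1)
  have h2 : (2 : ℝ) ^ (r + 1) = 2 * 2 ^ r := by
    rw [Real.rpow_add_one two_ne_zero, mul_comm]
  have hpt := phiDeriv_nonneg (r := r) ha ht
  calc s * phiDeriv r a t + t * phiDeriv r a s
      ≤ D * t * phiDeriv r a t + t * phiDeriv r a (D * t) := by
        gcongr
        exact phiDeriv_le_phiDeriv hr ha hs hst
    _ ≤ D ^ (r - 1) * t * phiDeriv r a t + t * (D ^ (r - 1) * phiDeriv r a t) := by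
        gcongr
        exact phiDeriv_mul_le hr ha hD ht
    _ = 2 * D ^ (r - 1) * (t * phiDeriv r a t) := by ring
    _ ≤ 2 * D ^ (r - 1) * (2 ^ r * phi r a t) :=
        mul_le_mul_of_nonneg_left (mul_phiDeriv_le_phi hr ha ht) (by positivity)
    _ = 2 ^ (r + 1) * D ^ (r - 1) * phi r a t := by rw [h2]; ring

lemma mul_phiDeriv_add_mul_phiDeriv_le_of_mul_le (hr : 2 ≤ r) (ha : 0 ≤ a) {D s t : ℝ}
    (hD : 1 ≤ D) (hs : 0 ≤ s) (ht : 0 ≤ t) (hts : D * t ≤ s) :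
    D * (s * phiDeriv r a t + t * phiDeriv r a s) ≤ 2 ^ (r + 1) * phi r a s := by
  have hps := phiDeriv_nonneg (r := r) ha hs
  have h2 : (2 : ℝ) ^ (r + 1) = 2 * 2 ^ r := by
    rw [Real.rpow_add_one two_ne_zero, mul_comm]
  have hcross : s * phiDeriv r a t ≤ t * phiDeriv r a s :=
    mul_phiDeriv_le_mul_phiDeriv hr ha ht (le_trans (le_mul_of_one_le_left ht hD) hts)
  calc D * (s * phiDeriv r a t + t * phiDeriv r a s)
      ≤ 2 * (D * t * phiDeriv r a s) := by nlinarith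
    _ ≤ 2 * (s * phiDeriv r a s) := by gcongr
    _ ≤ 2 * (2 ^ r * phi r a s) := by linarith [mul_phiDeriv_le_phi hr ha hs]
    _ = 2 ^ (r + 1) * phi r a s := by rw [h2]; ring
end

theorem young_type_inequality_shifted
    (r : ℝ) (hr : 2 ≤ r) :
    ∀ ε : ℝ, 0 < ε → ∃ C : ℝ, 0 < C ∧
      ∀ a s t : ℝ, 0 ≤ a → 0 ≤ s → 0 ≤ t →
        s * ((a + t) ^ (r - 2) * t) + t * ((a + s) ^ (r - 2) * s) ≤
          ε * phi r a s + C * phi r a t := by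
  intro ε hε
  set D := max 1 (2 ^ (r + 1) / ε)
  have hD : 1 ≤ D := le_max_left _ _
  refine ⟨2 ^ (r + 1) * D ^ (r - 1), by positivity, fun a s t ha hs ht => ?_⟩
  change s * phiDeriv r a t + t * phiDeriv r a s ≤ _
  have hφs := phi_nonneg (r := r) ha hs
  have hφt := phi_nonneg (r := r) ha ht
  rcases le_total s (D * t) with hst | hts
  · linarith [mul_phiDeriv_add_mul_phiDeriv_le_of_le_mul hr ha hD hs ht hst, mul_nonneg hε.le hφs]
  · have hεD : 2 ^ (r + 1) ≤ ε * D := (div_le_iff₀' hε).mp (le_max_right _ _)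
    have hscaled : D * (s * phiDeriv r a t + t * phiDeriv r a s) ≤ D * (ε * phi r a s) := by
      nlinarith [mul_phiDeriv_add_mul_phiDeriv_le_of_mul_le hr ha hD hs ht hts]
    have hC : 0 ≤ 2 ^ (r + 1) * D ^ (r - 1) * phi r a t := by positivity
    linarith [le_of_mul_le_mul_left hscaled (by positivity)]
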